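/- arXiv:1705.05286 — 4 statements merged into one kernel-verified Lean document; each statement's English description precedes it below -/
import Mathlib

section
/- For fixed 0 < τ < 1 and θ > 0, the function f_θ(d) = (1 − (1 − θ(1−τ)d)^{1/(1−τ)})/d is nonincreasing on the interval 0 < d < 1/(θ(1−τ)). -/
/-!
With `a = θ(1 - τ)` and `p = 1/(1 - τ) ≥ 1`, the map `φ(d) = (1 - a d)^p` is convex on
`{d | a d ≤ 1}` (a convex power of an affine map) and `φ(0) = 1`. So `f_θ(d) = -(φ(d) - φ(0))/d`
is minus the slope of a secant of a convex function through the fixed point `0`, and such slopes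
are nondecreasing in `d`.
-/

open Matrix
open scoped Matrix.Norms.L2Operator

variable {n : ℕ}

/-- largest singular value = spectral (ℓ²-operator) norm -/
noncomputable def sigma1 {m k : ℕ} (M : Matrix (Fin m) (Fin k) ℝ) : ℝ := ‖M‖

/-- Thompson part metric -/
noncomputable def dT (P Q : Matrix (Fin n) (Fin n) ℝ) : ℝ :=
  max (Real.log (sigma1 (P⁻¹ * Q))) (Real.log (sigma1 (Q⁻¹ * P)))

/-- spectral function of a matrix: apply `f` to eigenvalues (0 if not Hermitian) -/
noncomputable def matFun (f : ℝ → ℝ) (A : Matrix (Fin n) (Fin n) ℝ) :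
    Matrix (Fin n) (Fin n) ℝ :=
  if hA : A.IsHermitian then
    (hA.eigenvectorUnitary : Matrix (Fin n) (Fin n) ℝ) *
      diagonal (fun i => f (hA.eigenvalues i)) *
      star (hA.eigenvectorUnitary : Matrix (Fin n) (Fin n) ℝ)
  else 0

noncomputable def matRpow (A : Matrix (Fin n) (Fin n) ℝ) (r : ℝ) : Matrix (Fin n) (Fin n) ℝ :=
  matFun (fun x => x ^ r) A

noncomputable def matExp (A : Matrix (Fin n) (Fin n) ℝ) : Matrix (Fin n) (Fin n) ℝ :=
  matFun Real.exp A

open Set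

theorem ConvexOn.antitoneOn_apply_zero_sub_div {𝕜 : Type*} [Field 𝕜] [LinearOrder 𝕜]
    [IsStrictOrderedRing 𝕜] {s : Set 𝕜} {f : 𝕜 → 𝕜} (hf : ConvexOn 𝕜 s f) (h0 : 0 ∈ s) :
    AntitoneOn (fun x => (f 0 - f x) / x) (s ∩ Ioi 0) := by
  rintro x ⟨hxs, hx⟩ y ⟨hys, hy⟩ hxy
  have hslope := hf.secant_mono h0 hxs hys (ne_of_gt hx) (ne_of_gt hy) hxy
  simp only [sub_zero] at hslope
  dsimp only
  rw [← neg_sub (f y), ← neg_sub (f x), neg_div, neg_div]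
  exact neg_le_neg hslope

theorem convexOn_one_sub_mul_rpow {a p : ℝ} (hp : 1 ≤ p) :
    ConvexOn ℝ {d | 0 ≤ 1 - a * d} fun d => (1 - a * d) ^ p := by
  have hline : ∀ d : ℝ, AffineMap.lineMap (1 : ℝ) (1 - a) d = 1 - a * d := fun d => by
    rw [AffineMap.lineMap_apply_ring']; ring
  have hconv := (convexOn_rpow hp).comp_affineMap (AffineMap.lineMap (1 : ℝ) (1 - a))
  have hdom : AffineMap.lineMap (1 : ℝ) (1 - a) ⁻¹' Ici 0 = {d | 0 ≤ 1 - a * d} := by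
    ext d; simp [hline]
  have hfun : (fun x : ℝ => x ^ p) ∘ AffineMap.lineMap (1 : ℝ) (1 - a) = fun d => (1 - a * d) ^ p :=
    funext fun d => by simp [hline]
  rwa [hdom, hfun] at hconv

theorem f_theta_nonincreasing (τ θ : ℝ)
    (hτ0 : 0 < τ) (hτ1 : τ < 1) (hθ : 0 < θ) :
    AntitoneOn (fun d : ℝ => (1 - (1 - θ * (1 - τ) * d) ^ (1 / (1 - τ))) / d)
      (Set.Ioo 0 (1 / (θ * (1 - τ)))) := by
  have ha : 0 < θ * (1 - τ) := mul_pos hθ (by linarith)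
  have hp : 1 ≤ 1 / (1 - τ) := by rw [le_div_iff₀ (by linarith)]; linarith
  have hanti := (convexOn_one_sub_mul_rpow (a := θ * (1 - τ)) hp).antitoneOn_apply_zero_sub_div
    (by simp)
  have hsub : Ioo 0 (1 / (θ * (1 - τ))) ⊆ {d | 0 ≤ 1 - θ * (1 - τ) * d} ∩ Ioi 0 :=
    fun d ⟨hd0, hd⟩ => ⟨sub_nonneg.2 ((lt_div_iff₀' ha).mp hd).le, hd0⟩
  simpa using hanti.mono hsub
end

section
/- Let 0 < τ < 1, let P be an n×n positive definite matrix with Cholesky-type factorization P = L Lᵀ, and let θ satisfy 0 < θ < ((1−τ)‖P‖)⁻¹. Define V = L(I − θ(1−τ)LᵀL)^{1/(τ−1)} Lᵀ and Φ = P⁻¹ − V⁻¹. If P ≥ d̄ I with d̄ > 0, then Φ ≤ ((1 − (1 − θ(1−τ)d̄)^{1/(1−τ)})/d̄) · I. -/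
open Matrix
open scoped Matrix.Norms.L2Operator

variable {n : ℕ}

/-!
Write `A = LᵀL`, `c = θ(1-τ)`, `r = 1/(1-τ)` and `k` for the constant of the claim. Then
`V⁻¹ = L⁻ᵀ (1 - cA)^r L⁻¹`, `P⁻¹ = L⁻ᵀ L⁻¹` and `k • 1 = L⁻ᵀ (kA) L⁻¹`, so by congruence it
suffices that `1 - (1 - cA)^r ≤ kA`, i.e. that `1 - (1 - ca)^r ≤ ka` on the spectrum of `A`.
Since `LᵀL` and `LLᵀ = P` have the same spectrum, that spectrum lies in `[d̄, ‖P‖]`, and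
`c‖P‖ < 1`. On this range the scalar inequality is the monotonicity of the chord slopes of the
convex function `x ↦ x^r` through `x = 1`.
-/

theorem one_sub_rpow_le_mul_one_sub {r x μ : ℝ} (hr : 1 ≤ r) (hx : 0 ≤ x) (hxμ : x ≤ μ)
    (hμ : μ < 1) : 1 - x ^ r ≤ (1 - μ ^ r) / (1 - μ) * (1 - x) := by
  have h := (convexOn_rpow hr).secant_mono (a := 1) (by simp) hx (hx.trans hxμ)
    (by linarith) (by linarith) hxμ
  rw [Real.one_rpow, div_le_iff_of_neg (by linarith)] at h
  have e : (μ ^ r - 1) / (μ - 1) = (1 - μ ^ r) / (1 - μ) := by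
    rw [← neg_div_neg_eq]; ring_nf
  rw [e] at h
  linarith

theorem one_sub_one_sub_mul_rpow_le {r c d a : ℝ} (hr : 1 ≤ r) (hc : 0 < c) (hd : 0 < d)
    (hda : d ≤ a) (hca : c * a ≤ 1) : 1 - (1 - c * a) ^ r ≤ (1 - (1 - c * d) ^ r) / d * a := by
  have h := one_sub_rpow_le_mul_one_sub hr (x := 1 - c * a) (μ := 1 - c * d) (by linarith)
    (by nlinarith) (by nlinarith [mul_pos hc hd])
  have e : (1 - (1 - c * d) ^ r) / (1 - (1 - c * d)) * (1 - (1 - c * a)) =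
      (1 - (1 - c * d) ^ r) / d * a := by
    field_simp
    ring
  linarith

theorem Matrix.spectrum_mul_comm {ι R 𝕜 : Type*} [Fintype ι] [DecidableEq ι] [Field R]
    [CommRing 𝕜] [Algebra R 𝕜] (A B : Matrix ι ι 𝕜) :
    spectrum R (A * B) = spectrum R (B * A) := by
  ext x
  rcases eq_or_ne x 0 with rfl | hx
  · simp only [spectrum.zero_mem_iff, isUnit_iff_isUnit_det, det_mul_comm]
  · simpa [hx] using congrArg (x ∈ ·) (spectrum.nonzero_mul_comm A B)

theorem Matrix.l2_opNorm_one_le {ι : Type*} [Fintype ι] [DecidableEq ι] :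
    ‖(1 : Matrix ι ι ℝ)‖ ≤ 1 := by
  rw [← diagonal_one, l2_opNorm_diagonal]
  exact pi_norm_le_iff_of_nonneg zero_le_one |>.mpr fun _ => by simp

section Loewner

open scoped MatrixOrder

variable {ι : Type*} [Fintype ι] [DecidableEq ι]

theorem Matrix.smul_one_le_conjTranspose_mul_self {𝕜 : Type*} [RCLike 𝕜] {d : ℝ}
    {L : Matrix ι ι 𝕜} (h : d • (1 : Matrix ι ι 𝕜) ≤ L * Lᴴ) :
    d • (1 : Matrix ι ι 𝕜) ≤ Lᴴ * L := by
  have hLLH : IsSelfAdjoint (L * Lᴴ) := .mul_star_self L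
  have hLHL : IsSelfAdjoint (Lᴴ * L) := .star_mul_self L
  rw [← Algebra.algebraMap_eq_smul_one, algebraMap_le_iff_le_spectrum] at h ⊢
  rwa [spectrum_mul_comm]

theorem Matrix.inv_sub_conj_le_smul_one_of_le {𝕜 : Type*} [RCLike 𝕜] {k : ℝ}
    {L Y : Matrix ι ι 𝕜} (hL : IsUnit L.det) (h : 1 - Y ≤ k • (Lᴴ * L)) :
    (L * Lᴴ)⁻¹ - (Lᴴ)⁻¹ * Y * L⁻¹ ≤ k • 1 := by
  have hLH : IsUnit Lᴴ.det := by rwa [det_conjTranspose, isUnit_star]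
  have hstar : star (Lᴴ)⁻¹ = L⁻¹ := by
    rw [star_eq_conjTranspose, conjTranspose_nonsing_inv, conjTranspose_conjTranspose]
  have hlhs : (L * Lᴴ)⁻¹ - (Lᴴ)⁻¹ * Y * L⁻¹ = (Lᴴ)⁻¹ * (1 - Y) * star (Lᴴ)⁻¹ := by
    rw [hstar, mul_inv_rev, mul_sub, sub_mul, mul_one]
  have hrhs : k • (1 : Matrix ι ι 𝕜) = (Lᴴ)⁻¹ * (k • (Lᴴ * L)) * star (Lᴴ)⁻¹ := by
    rw [hstar, Matrix.mul_smul, Matrix.smul_mul, ← Matrix.mul_assoc, nonsing_inv_mul _ hLH,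
      one_mul, mul_nonsing_inv _ hL]
  rw [hlhs, hrhs]
  exact star_right_conjugate_le_conjugate h _

theorem Matrix.spectrum_conjTranspose_mul_self_subset {d : ℝ} {L : Matrix ι ι ℝ}
    (h : d • (1 : Matrix ι ι ℝ) ≤ L * Lᴴ) : spectrum ℝ (Lᴴ * L) ⊆ Set.Icc d ‖L * Lᴴ‖ := by
  intro a ha
  refine ⟨(algebraMap_le_iff_le_spectrum (IsSelfAdjoint.star_mul_self L)).mp ?_ a ha, ?_⟩
  · rw [Algebra.algebraMap_eq_smul_one]
    exact smul_one_le_conjTranspose_mul_self h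
  · calc a ≤ ‖a‖ := Real.le_norm_self a
      _ ≤ ‖Lᴴ * L‖ * ‖(1 : Matrix ι ι ℝ)‖ := spectrum.norm_le_norm_mul_of_mem ha
      _ ≤ ‖Lᴴ * L‖ := mul_le_of_le_one_right (norm_nonneg _) l2_opNorm_one_le
      _ = ‖L * Lᴴ‖ := by
        rw [← star_eq_conjTranspose, CStarRing.norm_star_mul_self, CStarRing.norm_self_mul_star]

theorem Matrix.one_sub_cfc_one_sub_mul_rpow_le {A : Matrix ι ι ℝ} (hA : IsSelfAdjoint A)
    {r c d : ℝ} (hr : 1 ≤ r) (hc : 0 < c) (hd : 0 < d)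
    (hspec : ∀ a ∈ spectrum ℝ A, d ≤ a ∧ c * a < 1) :
    1 - cfc (fun a => (1 - c * a) ^ r) A ≤ ((1 - (1 - c * d) ^ r) / d) • A :=
  calc 1 - cfc (fun a => (1 - c * a) ^ r) A = cfc (fun a => 1 - (1 - c * a) ^ r) A := by
        rw [cfc_sub _ _ _ ((Set.toFinite _).continuousOn _) ((Set.toFinite _).continuousOn _),
          cfc_const_one ℝ _ hA]
    _ ≤ cfc (fun a => (1 - (1 - c * d) ^ r) / d * a) A :=
        cfc_mono
          (fun a ha => one_sub_one_sub_mul_rpow_le hr hc hd (hspec a ha).1 (hspec a ha).2.le)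
          ((Set.toFinite _).continuousOn _) ((Set.toFinite _).continuousOn _)
    _ = _ := by rw [cfc_const_mul _ _ _ ((Set.toFinite _).continuousOn _), cfc_id' ℝ _ hA]

end Loewner

theorem matFun_eq_cfc (f : ℝ → ℝ) (A : Matrix (Fin n) (Fin n) ℝ) : matFun f A = cfc f A := by
  by_cases hA : A.IsHermitian
  · rw [matFun, dif_pos hA, hA.cfc_eq, Matrix.IsHermitian.cfc, Unitary.conjStarAlgAut_apply]
    rfl
  · rw [matFun, dif_neg hA]
    exact (cfc_apply_of_not_predicate (f := f) A hA).symm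

theorem Matrix.inv_cfc_eq_cfc {ι 𝕜 : Type*} [Fintype ι] [DecidableEq ι] [RCLike 𝕜]
    {f g : ℝ → ℝ} {A : Matrix ι ι 𝕜} (hA : IsSelfAdjoint A)
    (hfg : ∀ x ∈ spectrum ℝ A, f x * g x = 1) : (cfc f A)⁻¹ = cfc g A := by
  refine inv_eq_right_inv ?_
  rw [← cfc_mul f g A ((Set.toFinite _).continuousOn _) ((Set.toFinite _).continuousOn _),
    cfc_congr hfg, cfc_const_one ℝ A]

theorem matRpow_one_sub_smul_eq_cfc {A : Matrix (Fin n) (Fin n) ℝ} (hA : IsSelfAdjoint A)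
    (c s : ℝ) : matRpow (1 - c • A) s = cfc (fun a => (1 - c * a) ^ s) A := by
  have h : cfc (fun a => 1 - c * a) A = 1 - c • A := by
    rw [cfc_sub _ _ A ((Set.toFinite _).continuousOn _) ((Set.toFinite _).continuousOn _),
      cfc_const_one ℝ A, cfc_const_mul c _ A ((Set.toFinite _).continuousOn _), cfc_id' ℝ A]
  rw [matRpow, matFun_eq_cfc, ← h,
    cfc_comp' (fun x => x ^ s) (fun a => 1 - c * a) A ((Set.toFinite _).continuousOn _)
      ((Set.toFinite _).continuousOn _)]

theorem inv_conj_matRpow_one_sub_smul {L : Matrix (Fin n) (Fin n) ℝ} {c : ℝ}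
    (hspec : ∀ a ∈ spectrum ℝ (Lᴴ * L), c * a < 1) (s : ℝ) :
    (L * matRpow (1 - c • (Lᴴ * L)) (-s) * Lᴴ)⁻¹ =
      (Lᴴ)⁻¹ * cfc (fun a => (1 - c * a) ^ s) (Lᴴ * L) * L⁻¹ := by
  have hA : IsSelfAdjoint (Lᴴ * L) := .star_mul_self L
  rw [Matrix.mul_inv_rev, Matrix.mul_inv_rev, matRpow_one_sub_smul_eq_cfc hA,
    Matrix.inv_cfc_eq_cfc hA, Matrix.mul_assoc]
  intro a ha
  rw [← Real.rpow_add (by linarith [hspec a ha]), neg_add_cancel, Real.rpow_zero]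

theorem Phi_upper_bound_tau_lt_one {n : ℕ} (τ θ dbar : ℝ)
    (L P V Φ : Matrix (Fin n) (Fin n) ℝ)
    (hτ0 : 0 < τ) (hτ1 : τ < 1)
    (hP : P.PosDef) (hPL : P = L * Lᵀ)
    (hθ0 : 0 < θ) (hθ : θ < ((1 - τ) * sigma1 P)⁻¹)
    (hd : 0 < dbar)
    (hPd : (P - dbar • (1 : Matrix (Fin n) (Fin n) ℝ)).PosSemidef)
    (hV : V = L * matRpow (1 - (θ * (1 - τ)) • (Lᵀ * L)) (1 / (τ - 1)) * Lᵀ)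
    (hΦ : Φ = P⁻¹ - V⁻¹) :
    (((1 - (1 - θ * (1 - τ) * dbar) ^ (1 / (1 - τ))) / dbar) •
        (1 : Matrix (Fin n) (Fin n) ℝ) - Φ).PosSemidef := by
  set c := θ * (1 - τ)
  set r := 1 / (1 - τ)
  have hc : 0 < c := mul_pos hθ0 (by linarith)
  have hr : 1 ≤ r := by rw [le_div_iff₀ (by linarith)]; linarith
  have hcP : c * ‖P‖ < 1 := by
    rw [sigma1] at hθ
    have hpos : 0 < (1 - τ) * ‖P‖ := inv_pos.mp (hθ0.trans hθ)
    rw [← one_div, lt_div_iff₀ hpos] at hθ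
    linarith
  rw [← conjTranspose_eq_transpose_of_trivial] at hPL hV
  have hL : IsUnit L.det := by
    have h := hP.isUnit
    rw [hPL, isUnit_iff_isUnit_det, det_mul] at h
    exact isUnit_of_mul_isUnit_left h
  have hspec : ∀ a ∈ spectrum ℝ (Lᴴ * L), dbar ≤ a ∧ c * a < 1 := fun a ha => by
    obtain ⟨hda, haP⟩ := spectrum_conjTranspose_mul_self_subset (hPL ▸ hPd) ha
    exact ⟨hda, (mul_le_mul_of_nonneg_left (hPL ▸ haP) hc.le).trans_lt hcP⟩
  have hτr : 1 / (τ - 1) = -r := by rw [← neg_sub 1 τ, div_neg]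
  rw [hΦ, hV, hτr, inv_conj_matRpow_one_sub_smul (fun a ha => (hspec a ha).2), hPL]
  exact inv_sub_conj_le_smul_one_of_le hL
    (one_sub_cfc_one_sub_mul_rpow_le (.star_mul_self L) hr hc hd hspec)
end

section
/- For 0 < τ < 1 and fixed θ with 0 < θ < ((1−τ)‖P‖)⁻¹, the function γ_τ(P, θ) = tr(−(1/(τ(1−τ)))(I − θ(1−τ)P)^{τ/(τ−1)} + (1/(1−τ))(I − θ(1−τ)P)^{1/(τ−1)} + (1/τ)I) is monotone nondecreasing in P: if P ≥ Q ≥ 0 (with both satisfying the θ-bound) then γ_τ(P, θ) ≥ γ_τ(Q, θ). -/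
open Matrix
open scoped Matrix.Norms.L2Operator

variable {n : ℕ}

noncomputable def gammaTau {n : ℕ} (τ θ : ℝ) (P : Matrix (Fin n) (Fin n) ℝ) : ℝ :=
  ((-(1/(τ*(1-τ)))) • matRpow (1 - (θ*(1-τ)) • P) (τ/(τ-1))
    + (1/(1-τ)) • matRpow (1 - (θ*(1-τ)) • P) (1/(τ-1))
    + (1/τ) • (1 : Matrix (Fin n) (Fin n) ℝ)).trace

/-!
Put `A_P = 1 - θ(1-τ) P`. Then `γ_τ(P, θ) = ∑ᵢ g(λᵢ(A_P))` for the scalar function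
`g = gammaTauScalar τ`, and `g' t = -t ^ (1/(τ-1) - 1) (1 - t) / (1-τ)²` shows that `g` is
nonincreasing and convex on `(0, 1]`, which contains the spectra of `A_P` and `A_Q`.
Now `P ≥ Q` means `A_P ≤ A_Q`. In an orthonormal eigenbasis of `A_Q`, the diagonal of `A_P` is
`(W ⊙ W) λ(A_P)` for an orthogonal `W`, i.e. a doubly stochastic average of `λ(A_P)`, and it is
dominated entrywise by `λ(A_Q)`. Hence
`∑ g(λ(A_Q)) ≤ ∑ⱼ g(((W ⊙ W) λ(A_P))ⱼ) ≤ ∑ g(λ(A_P))`, by monotonicity and then by Jensen.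
-/

open Real Set
open scoped MatrixOrder

noncomputable def gammaTauScalar (τ t : ℝ) : ℝ :=
  -(1/(τ*(1-τ))) * t ^ (τ/(τ-1)) + (1/(1-τ)) * t ^ (1/(τ-1)) + 1/τ

section Scalar

variable {τ : ℝ}

theorem hasDerivAt_gammaTauScalar (hτ0 : τ ≠ 0) (hτ1 : τ ≠ 1) {t : ℝ} (ht : t ≠ 0) :
    HasDerivAt (gammaTauScalar τ) (-(t ^ (1/(τ-1) - 1) * (1 - t)) / (1-τ)^2) t := by
  have h := (((hasDerivAt_rpow_const (p := τ/(τ-1)) (Or.inl ht)).const_mul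
    (-(1/(τ*(1-τ))))).add ((hasDerivAt_rpow_const (p := 1/(τ-1)) (Or.inl ht)).const_mul
    (1/(1-τ)))).add_const (1/τ)
  refine h.congr_deriv ?_
  have h1 : 1 - τ ≠ 0 := sub_ne_zero.mpr hτ1.symm
  have h2 : τ - 1 ≠ 0 := sub_ne_zero.mpr hτ1
  have hexp : τ/(τ-1) - 1 = (1/(τ-1) - 1) + 1 := by field_simp; ring
  rw [hexp, rpow_add_one ht]
  field_simp
  ring

theorem antitoneOn_gammaTauScalar (hτ0 : τ ≠ 0) (hτ1 : τ ≠ 1) :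
    AntitoneOn (gammaTauScalar τ) (Ioc 0 1) := by
  refine antitoneOn_of_hasDerivWithinAt_nonpos (convex_Ioc 0 1)
    (fun t ht => (hasDerivAt_gammaTauScalar hτ0 hτ1 ht.1.ne').continuousAt.continuousWithinAt)
    (fun t ht => (hasDerivAt_gammaTauScalar hτ0 hτ1 (interior_subset ht).1.ne').hasDerivWithinAt)
    fun t ht => ?_
  rw [interior_Ioc] at ht
  have : 0 ≤ t ^ (1/(τ-1) - 1) * (1 - t) :=
    mul_nonneg (rpow_nonneg ht.1.le _) (by linarith [ht.2])
  exact div_nonpos_of_nonpos_of_nonneg (neg_nonpos.mpr this) (sq_nonneg _)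

theorem convexOn_gammaTauScalar (hτ0 : τ ≠ 0) (hτ1 : τ < 1) :
    ConvexOn ℝ (Ioc 0 1) (gammaTauScalar τ) := by
  have hderiv {t : ℝ} (ht : 0 < t) := hasDerivAt_gammaTauScalar hτ0 hτ1.ne ht.ne'
  refine MonotoneOn.convexOn_of_deriv (convex_Ioc 0 1)
    (fun t ht => (hderiv ht.1).continuousAt.continuousWithinAt)
    (fun t ht => (hderiv (interior_subset ht).1).differentiableAt.differentiableWithinAt) ?_
  rw [interior_Ioc]
  intro s hs t ht hst
  rw [(hderiv hs.1).deriv, (hderiv ht.1).deriv]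
  have hexp : 1/(τ-1) - 1 ≤ 0 := by
    have : 1/(τ-1) < 0 := one_div_neg.mpr (by linarith)
    linarith
  have : t ^ (1/(τ-1) - 1) * (1 - t) ≤ s ^ (1/(τ-1) - 1) * (1 - s) :=
    mul_le_mul (rpow_le_rpow_of_nonpos hs.1 hst hexp) (by linarith) (by linarith [ht.2])
      (rpow_nonneg hs.1.le _)
  gcongr

end Scalar

section Matrix

variable {ι : Type*} [Fintype ι] [DecidableEq ι]

theorem ConvexOn.sum_map_mulVec_le_of_mem_doublyStochastic {D : Set ℝ} {f : ℝ → ℝ}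
    (hf : ConvexOn ℝ D f) {M : Matrix ι ι ℝ} (hM : M ∈ doublyStochastic ℝ ι) {x : ι → ℝ}
    (hx : ∀ i, x i ∈ D) :
    ∑ j, f ((M *ᵥ x) j) ≤ ∑ i, f (x i) :=
  calc ∑ j, f ((M *ᵥ x) j) ≤ ∑ j, ∑ i, M j i * f (x i) := by
        refine Finset.sum_le_sum fun j _ => ?_
        simpa [mulVec, dotProduct] using
          hf.map_sum_le (fun i _ => nonneg_of_mem_doublyStochastic hM)
            (sum_row_of_mem_doublyStochastic hM j) (fun i _ => hx i)
    _ = ∑ i, f (x i) := by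
        rw [Finset.sum_comm]
        simp only [← Finset.sum_mul, sum_col_of_mem_doublyStochastic hM, one_mul]

theorem Convex.mulVec_mem_of_mem_doublyStochastic {D : Set ℝ} (hD : Convex ℝ D)
    {M : Matrix ι ι ℝ} (hM : M ∈ doublyStochastic ℝ ι) {x : ι → ℝ} (hx : ∀ i, x i ∈ D) (j : ι) :
    (M *ᵥ x) j ∈ D := by
  simpa [mulVec, dotProduct] using hD.sum_mem (fun i _ => nonneg_of_mem_doublyStochastic hM)
    (sum_row_of_mem_doublyStochastic hM j) (fun i _ => hx i)

theorem hadamard_self_mem_doublyStochastic {U : Matrix ι ι ℝ} (hU : U ∈ unitary (Matrix ι ι ℝ)) :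
    U ⊙ U ∈ doublyStochastic ℝ ι := by
  refine mem_doublyStochastic_iff_sum.mpr ⟨fun i j => mul_self_nonneg _, fun i => ?_, fun j => ?_⟩
  · simpa [mul_apply] using congrArg (· i i) (Unitary.mul_star_self_of_mem hU)
  · simpa [mul_apply] using congrArg (· j j) (Unitary.star_mul_self_of_mem hU)

theorem Matrix.norm_le_l2_opNorm_of_mem_spectrum {𝕜 : Type*} [RCLike 𝕜] {A : Matrix ι ι 𝕜}
    {k : 𝕜} (hk : k ∈ spectrum 𝕜 A) : ‖k‖ ≤ ‖A‖ := by
  have hone : ‖(1 : Matrix ι ι 𝕜)‖ ≤ 1 := by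
    rw [← diagonal_one, l2_opNorm_diagonal]
    exact (pi_norm_le_iff_of_nonneg zero_le_one).mpr fun _ => norm_one.le
  exact (spectrum.norm_le_norm_mul_of_mem hk).trans (mul_le_of_le_one_right (norm_nonneg _) hone)

theorem Matrix.IsHermitian.diag_star_mul_mul {A : Matrix ι ι ℝ} (hA : A.IsHermitian)
    (V : Matrix ι ι ℝ) :
    diag (star V * A * V) =
      ((star V * (hA.eigenvectorUnitary : Matrix ι ι ℝ)) ⊙
        (star V * (hA.eigenvectorUnitary : Matrix ι ι ℝ))) *ᵥ hA.eigenvalues := by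
  set W := star V * (hA.eigenvectorUnitary : Matrix ι ι ℝ)
  have hconj : star V * A * V = W * diagonal hA.eigenvalues * star W := by
    conv_lhs => rw [hA.spectral_theorem]
    simp [W, Unitary.conjStarAlgAut_apply, Matrix.mul_assoc]
  ext j
  simp only [diag_apply, hconj, mul_apply, diagonal_apply, mul_ite, mul_zero, Finset.sum_ite_eq',
    Finset.mem_univ, if_true, star_apply, star_trivial, mulVec, dotProduct, hadamard_apply]
  exact Finset.sum_congr rfl fun i _ => by ring

theorem Matrix.IsHermitian.diag_star_eigenvectorUnitary_mul_mul {B : Matrix ι ι ℝ}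
    (hB : B.IsHermitian) :
    diag (star (hB.eigenvectorUnitary : Matrix ι ι ℝ) * B *
      (hB.eigenvectorUnitary : Matrix ι ι ℝ)) = hB.eigenvalues := by
  have h := hB.conjStarAlgAut_star_eigenvectorUnitary
  simp only [Unitary.conjStarAlgAut_apply, Unitary.coe_star, star_star] at h
  ext j
  simp [h]

theorem Matrix.IsHermitian.sum_map_eigenvalues_le_of_le {A B : Matrix ι ι ℝ} (hA : A.IsHermitian)
    (hB : B.IsHermitian) (hAB : A ≤ B) {D : Set ℝ} {f : ℝ → ℝ} (hf : ConvexOn ℝ D f)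
    (hf' : AntitoneOn f D) (hAD : ∀ i, hA.eigenvalues i ∈ D) (hBD : ∀ i, hB.eigenvalues i ∈ D) :
    ∑ i, f (hB.eigenvalues i) ≤ ∑ i, f (hA.eigenvalues i) := by
  set V : Matrix ι ι ℝ := (hB.eigenvectorUnitary : Matrix ι ι ℝ)
  set W := star V * (hA.eigenvectorUnitary : Matrix ι ι ℝ)
  have hM : W ⊙ W ∈ doublyStochastic ℝ ι := hadamard_self_mem_doublyStochastic
    (mul_mem (Unitary.star_mem hB.eigenvectorUnitary.2) hA.eigenvectorUnitary.2)
  have hdiag (j : ι) : ((W ⊙ W) *ᵥ hA.eigenvalues) j ≤ hB.eigenvalues j := by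
    rw [← hA.diag_star_mul_mul V, ← hB.diag_star_eigenvectorUnitary_mul_mul]
    have := (le_iff.mp (star_left_conjugate_le_conjugate hAB V)).diag_nonneg (i := j)
    simpa [sub_nonneg] using this
  calc ∑ j, f (hB.eigenvalues j) ≤ ∑ j, f (((W ⊙ W) *ᵥ hA.eigenvalues) j) :=
        Finset.sum_le_sum fun j _ =>
          hf' (hf.1.mulVec_mem_of_mem_doublyStochastic hM hAD j) (hBD j) (hdiag j)
    _ ≤ ∑ i, f (hA.eigenvalues i) := hf.sum_map_mulVec_le_of_mem_doublyStochastic hM hAD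

theorem Matrix.PosSemidef.eigenvalues_one_sub_smul_mem_Ioc {P : Matrix ι ι ℝ} (hP : P.PosSemidef)
    {s : ℝ} (hPs : ‖P‖ < s⁻¹) (hA : (1 - s • P).IsHermitian) (i : ι) :
    hA.eigenvalues i ∈ Ioc 0 1 := by
  have hPle : P ≤ algebraMap ℝ _ ‖P‖ := (le_algebraMap_iff_spectrum_le hP.1).mpr fun x hx =>
    (le_abs_self x).trans (norm_le_l2_opNorm_of_mem_spectrum hx)
  have hs : 0 < s := inv_pos.mp ((norm_nonneg P).trans_lt hPs)
  have hle : 1 - s • P ≤ algebraMap ℝ _ 1 := by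
    simpa using smul_nonneg hs.le (nonneg_iff_posSemidef.mpr hP)
  have hge : algebraMap ℝ _ (1 - s * ‖P‖) ≤ 1 - s • P :=
    calc algebraMap ℝ _ (1 - s * ‖P‖) = 1 - s • algebraMap ℝ (Matrix ι ι ℝ) ‖P‖ := by
          simp [Algebra.algebraMap_eq_smul_one, sub_smul, mul_smul]
      _ ≤ 1 - s • P := sub_le_sub_left (smul_le_smul_of_nonneg_left hPle hs.le) 1
  have hmem := hA.eigenvalues_mem_spectrum_real i
  constructor
  · have : 0 < 1 - s * ‖P‖ := sub_pos.mpr ((lt_inv_mul_iff₀ hs).mp (by rwa [mul_one]))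
    exact this.trans_le ((algebraMap_le_iff_le_spectrum hA).mp hge _ hmem)
  · exact (le_algebraMap_iff_spectrum_le hA).mp hle _ hmem

end Matrix

theorem trace_matFun (f : ℝ → ℝ) {A : Matrix (Fin n) (Fin n) ℝ} (hA : A.IsHermitian) :
    (matFun f A).trace = ∑ i, f (hA.eigenvalues i) := by
  rw [matFun, dif_pos hA, trace_mul_comm, ← Matrix.mul_assoc,
    Unitary.coe_star_mul_self hA.eigenvectorUnitary, Matrix.one_mul, trace_diagonal]

theorem gammaTau_eq_sum_eigenvalues (τ θ : ℝ) {P : Matrix (Fin n) (Fin n) ℝ}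
    (hA : (1 - (θ * (1 - τ)) • P).IsHermitian) :
    gammaTau τ θ P = ∑ i, gammaTauScalar τ (hA.eigenvalues i) := by
  rw [gammaTau, trace_add, trace_add, trace_smul, trace_smul, trace_smul, trace_one, matRpow,
    matRpow, trace_matFun _ hA, trace_matFun _ hA]
  simp only [gammaTauScalar, smul_eq_mul, Finset.sum_add_distrib, Finset.mul_sum,
    Finset.sum_const, Finset.card_univ, Fintype.card_fin, nsmul_eq_mul]
  ring

theorem gammaTau_monotone_in_P_general {n : ℕ} (τ θ : ℝ)
    (hτ0 : 0 < τ) (hτ1 : τ < 1)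
    (P Q : Matrix (Fin n) (Fin n) ℝ)
    (hP : P.PosSemidef) (hQ : Q.PosSemidef)
    (hPQ : (P - Q).PosSemidef)
    (hPb : sigma1 P < (θ * (1 - τ))⁻¹) (hQb : sigma1 Q < (θ * (1 - τ))⁻¹) :
    gammaTau τ θ Q ≤ gammaTau τ θ P := by
  have hs : 0 ≤ θ * (1 - τ) := (inv_pos.mp ((norm_nonneg P).trans_lt hPb)).le
  have hAP : (1 - (θ * (1 - τ)) • P).IsHermitian :=
    isHermitian_one.sub (hP.1.smul (IsSelfAdjoint.all _))
  have hAQ : (1 - (θ * (1 - τ)) • Q).IsHermitian :=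
    isHermitian_one.sub (hQ.1.smul (IsSelfAdjoint.all _))
  rw [gammaTau_eq_sum_eigenvalues τ θ hAQ, gammaTau_eq_sum_eigenvalues τ θ hAP]
  exact hAP.sum_map_eigenvalues_le_of_le hAQ
    (sub_le_sub_left (smul_le_smul_of_nonneg_left (le_iff.mpr hPQ) hs) 1)
    (convexOn_gammaTauScalar hτ0.ne' hτ1) (antitoneOn_gammaTauScalar hτ0.ne' hτ1.ne)
    (hP.eigenvalues_one_sub_smul_mem_Ioc hPb hAP) (hQ.eigenvalues_one_sub_smul_mem_Ioc hQb hAQ)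

theorem gammaTau_monotone_in_P {n : ℕ} (τ θ : ℝ)
    (hτ0 : 0 < τ) (hτ1 : τ < 1) (hθ : 0 < θ)
    (P Q : Matrix (Fin n) (Fin n) ℝ)
    (hP : P.PosSemidef) (hQ : Q.PosSemidef)
    (hPQ : (P - Q).PosSemidef)
    (hPb : sigma1 P < (θ * (1 - τ))⁻¹) (hQb : sigma1 Q < (θ * (1 - τ))⁻¹) :
    gammaTau τ θ Q ≤ gammaTau τ θ P :=
  gammaTau_monotone_in_P_general τ θ hτ0 hτ1 P Q hP hQ hPQ hPb hQb
end

section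
/- Let r be the standard Riccati mapping r(P) = A(P⁻¹ + Cᵀ(DDᵀ)⁻¹C)⁻¹Aᵀ + BBᵀ with P̄₀ = BBᵀ positive definite and P̄_{k+1} = r(P̄_k). Let {P_k} be any sequence of positive definite matrices satisfying P₀ > 0 and P_{k+1} = A(P_k⁻¹ − Φ_{k−1} + Cᵀ(DDᵀ)⁻¹C)⁻¹Aᵀ + BBᵀ for positive semidefinite matrices Φ_{k−1} such that each inverse exists and is positive definite. Then P_k ≥ P̄_q for all k ≥ q + 1 and any q ≥ 0. -/
/-!
Inversion reverses the Loewner order on positive definite matrices (both Schur complements of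
`[[Q, 1], [1, P⁻¹]]` are positive semidefinite together). Hence subtracting `Φ ≥ 0` from the
information matrix `P⁻¹` can only enlarge the Riccati update, and the update is monotone in `P`.
An induction on `q` then compares the robust sequence with the nominal one, starting from
`P̄₀ = BBᵀ ≤ P_{k+1}`.
-/

open Matrix
open scoped Matrix.Norms.L2Operator

variable {n : ℕ}

open scoped MatrixOrder ComplexOrder

namespace Matrix

lemma PosDef.inv_le_inv_of_le {ι 𝕜 : Type*} [Fintype ι] [DecidableEq ι] [RCLike 𝕜]
    {P Q : Matrix ι ι 𝕜} (hP : P.PosDef) (hPQ : P ≤ Q) : Q⁻¹ ≤ P⁻¹ := by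
  have hQ : Q.PosDef := by simpa using hP.add_posSemidef hPQ
  have := hP.isUnit.invertible
  have := hQ.isUnit.invertible
  have hblock : (fromBlocks Q 1 1ᴴ P⁻¹).PosSemidef :=
    (PosDef.fromBlocks₂₂ Q 1 hP.inv).2 (by simpa [inv_inv_of_invertible] using le_iff.1 hPQ)
  rw [le_iff]
  simpa using (PosDef.fromBlocks₁₁ 1 P⁻¹ hQ).1 hblock

variable {ι κ : Type*} [Fintype ι] [Fintype κ]

lemma PosSemidef.mul_inv_mul_transpose [DecidableEq ι] {X : Matrix ι ι ℝ} (hX : X.PosSemidef)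
    (A : Matrix κ ι ℝ) : (A * X⁻¹ * Aᵀ).PosSemidef := by
  simpa using hX.inv.mul_mul_conjTranspose_same A

lemma mul_mul_transpose_le_mul_mul_transpose {X Y : Matrix ι ι ℝ} (hXY : X ≤ Y)
    (A : Matrix κ ι ℝ) : A * X * Aᵀ ≤ A * Y * Aᵀ := by
  simpa [sub_le_sub_iff_right, le_iff, ← Matrix.mul_sub, ← Matrix.sub_mul] using
    (le_iff.1 hXY).mul_mul_conjTranspose_same A

lemma mul_inv_add_mul_transpose_le_mul_inv_sub_add_mul_transpose [DecidableEq ι]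
    (A : Matrix κ ι ℝ) {P Pbar Φ S : Matrix ι ι ℝ} (hPbar : Pbar.PosDef) (hΦ : Φ.PosSemidef)
    (hX : (P⁻¹ - Φ + S).PosDef) (hle : Pbar ≤ P) :
    A * (Pbar⁻¹ + S)⁻¹ * Aᵀ ≤ A * (P⁻¹ - Φ + S)⁻¹ * Aᵀ := by
  have hX_le : P⁻¹ - Φ + S ≤ Pbar⁻¹ + S := by
    grw [sub_le_self P⁻¹ hΦ.nonneg, hPbar.inv_le_inv_of_le hle]
  exact mul_mul_transpose_le_mul_mul_transpose (hX.inv_le_inv_of_le hX_le) A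

end Matrix

theorem robust_sequence_lower_bound_general {n m p : ℕ}
    (A : Matrix (Fin n) (Fin n) ℝ) (B : Matrix (Fin n) (Fin m) ℝ)
    (C : Matrix (Fin p) (Fin n) ℝ) (D : Matrix (Fin p) (Fin m) ℝ)
    (hB : (B * Bᵀ).PosDef)
    (Pbar : ℕ → Matrix (Fin n) (Fin n) ℝ)
    (h0 : Pbar 0 = B * Bᵀ)
    (hrecbar : ∀ k, Pbar (k + 1) =
      A * ((Pbar k)⁻¹ + Cᵀ * (D * Dᵀ)⁻¹ * C)⁻¹ * Aᵀ + B * Bᵀ)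
    (P Φ : ℕ → Matrix (Fin n) (Fin n) ℝ)
    (hΦ : ∀ k, (Φ k).PosSemidef)
    (hinv2 : ∀ k, ((P k)⁻¹ - Φ k + Cᵀ * (D * Dᵀ)⁻¹ * C).PosDef)
    (hrec : ∀ k, P (k + 1) =
      A * ((P k)⁻¹ - Φ k + Cᵀ * (D * Dᵀ)⁻¹ * C)⁻¹ * Aᵀ + B * Bᵀ) :
    ∀ q k, q + 1 ≤ k → (P k - Pbar q).PosSemidef := by
  have hS : (Cᵀ * (D * Dᵀ)⁻¹ * C).PosSemidef := by
    simpa using (posSemidef_self_mul_conjTranspose D).inv.conjTranspose_mul_mul_same C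
  have hPbar : ∀ q, (Pbar q).PosDef := by
    intro q
    induction q with
    | zero => rwa [h0]
    | succ q ih =>
      rw [hrecbar]
      exact PosDef.posSemidef_add ((ih.posSemidef.inv.add hS).mul_inv_mul_transpose A) hB
  suffices key : ∀ q j, q ≤ j → Pbar q ≤ P (j + 1) by
    rintro q (_ | j) hk
    · omega
    · exact key q j (by omega)
  intro q
  induction q with
  | zero =>
    intro j _
    rw [hrec, h0]
    exact le_add_of_nonneg_left ((hinv2 j).posSemidef.mul_inv_mul_transpose A).nonneg
  | succ q ih =>
    rintro (_ | j) hj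
    · omega
    rw [hrec, hrecbar]
    exact add_le_add_left (mul_inv_add_mul_transpose_le_mul_inv_sub_add_mul_transpose A
      (hPbar q) (hΦ _) (hinv2 _) (ih j (by omega))) _

theorem robust_sequence_lower_bound {n m p : ℕ}
    (A : Matrix (Fin n) (Fin n) ℝ) (B : Matrix (Fin n) (Fin m) ℝ)
    (C : Matrix (Fin p) (Fin n) ℝ) (D : Matrix (Fin p) (Fin m) ℝ)
    (hB : (B * Bᵀ).PosDef) (hD : IsUnit (D * Dᵀ))
    (Pbar : ℕ → Matrix (Fin n) (Fin n) ℝ)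
    (h0 : Pbar 0 = B * Bᵀ)
    (hrecbar : ∀ k, Pbar (k + 1) =
      A * ((Pbar k)⁻¹ + Cᵀ * (D * Dᵀ)⁻¹ * C)⁻¹ * Aᵀ + B * Bᵀ)
    (P Φ : ℕ → Matrix (Fin n) (Fin n) ℝ)
    (hP : ∀ k, (P k).PosDef)
    (hΦ : ∀ k, (Φ k).PosSemidef)
    (hinv : ∀ k, ((P k)⁻¹ - Φ k).PosDef)
    (hinv2 : ∀ k, ((P k)⁻¹ - Φ k + Cᵀ * (D * Dᵀ)⁻¹ * C).PosDef)
    (hrec : ∀ k, P (k + 1) =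
      A * ((P k)⁻¹ - Φ k + Cᵀ * (D * Dᵀ)⁻¹ * C)⁻¹ * Aᵀ + B * Bᵀ) :
    ∀ q k, q + 1 ≤ k → (P k - Pbar q).PosSemidef :=
  robust_sequence_lower_bound_general A B C D hB Pbar h0 hrecbar P Φ hΦ hinv2 hrec
end
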